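/- arXiv:0903.1335 — 9 statements merged into one kernel-verified Lean document; each statement's English description precedes it below -/
import Mathlib

section
/- The natural ring homomorphism R → R[S]/J induced by the inclusion R ⊆ R[S] is injective. -/
open Polynomial

/-!
If `C r = ∑ cᵢ (X fᵢ - gᵢ)`, put `P = ∑ cᵢ fᵢ` and `Q = ∑ cᵢ gᵢ`, so that `X P - Q = C r`.
Comparing coefficients, the `Xʲ`-coefficient of `P` equals the `Xʲ⁺¹`-coefficient of `Q`,
which is `s` applied to the `Xʲ⁺¹`-coefficient of `P`. Hence the coefficients of `P` vanish
from the top down, then so do those of `Q`, and `C r = 0`.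
-/

theorem Submodule.sum_smul_apply_eq_zero {R M N ι : Type*} [Semiring R] [AddCommMonoid M]
    [AddCommMonoid N] [Module R M] [Module R N] {p : Submodule R M} (s : p →ₗ[R] N)
    (t : Finset ι) (a : ι → R) (x : ι → p) (h : ∑ i ∈ t, a i • (x i : M) = 0) :
    ∑ i ∈ t, a i • s (x i) = 0 := by
  have hx : ∑ i ∈ t, a i • x i = 0 := Subtype.ext (by simpa using h)
  simp only [← map_smul, ← map_sum, hx, map_zero]

namespace Polynomial

theorem eq_zero_of_coeff_succ_eq_zero_imp {R : Type*} [Semiring R] {P : R[X]}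
    (h : ∀ j, P.coeff (j + 1) = 0 → P.coeff j = 0) : P = 0 := by
  suffices hdesc : ∀ d j, P.natDegree < j + d → P.coeff j = 0 from
    ext fun j => hdesc (P.natDegree + 1) j (by omega)
  intro d
  induction d with
  | zero => exact fun j hj => coeff_eq_zero_of_natDegree_lt hj
  | succ d ih => exact fun j hj => h j (ih (j + 1) (by omega))

theorem eq_zero_of_X_mul_sub_eq_C {R : Type*} [CommRing R] {P Q : R[X]} {r : R}
    (hQ : ∀ j, P.coeff j = 0 → Q.coeff j = 0) (h : X * P - Q = C r) : r = 0 := by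
  have hshift : ∀ j, P.coeff j = Q.coeff (j + 1) := fun j => by
    simpa [sub_eq_zero, coeff_C] using congr_arg (coeff · (j + 1)) h
  have hP : P = 0 := eq_zero_of_coeff_succ_eq_zero_imp fun j hj => (hshift j).trans (hQ _ hj)
  have hQ0 : Q = 0 := ext fun j => hQ j (by simp [hP])
  simpa [hP, hQ0, eq_comm (a := (0 : R[X]))] using h

end Polynomial

/-- Let `R` be a commutative ring, `I = (f₁, …, fₙ)` a finitely generated ideal,
`s : I → R` an `R`-module homomorphism with `gᵢ = s fᵢ`, and
`J = (S·f₁ - g₁, …, S·fₙ - gₙ) ⊆ R[S]`.  Then the natural ring homomorphism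
`R → R[S]/J` induced by the inclusion `R ⊆ R[S]` is injective. -/
theorem stmt_0 {R : Type} [CommRing R] {n : ℕ} (f g : Fin n → R)
    (s : ↥(Ideal.span (Set.range f)) →ₗ[R] R)
    (hg : ∀ i, g i = s ⟨f i, Ideal.subset_span (Set.mem_range_self i)⟩)
    (J : Ideal (Polynomial R))
    (hJ : J = Ideal.span (Set.range fun i => X * Polynomial.C (f i) - Polynomial.C (g i))) :
    Function.Injective (fun r : R => Ideal.Quotient.mk J (Polynomial.C r)) := by
  subst hJ
  refine (injective_iff_map_eq_zero ((Ideal.Quotient.mk _).comp (C : R →+* R[X]))).mpr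
    fun r hr => ?_
  obtain ⟨c, hc⟩ := Ideal.mem_span_range_iff_exists_fun.mp (Ideal.Quotient.eq_zero_iff_mem.mp hr)
  refine eq_zero_of_X_mul_sub_eq_C (P := ∑ i, c i * C (f i)) (Q := ∑ i, c i * C (g i))
    (fun j hj => ?_) ?_
  · simp only [finsetSum_coeff, coeff_mul_C, hg] at hj ⊢
    simp only [← smul_eq_mul] at hj ⊢
    exact Submodule.sum_smul_apply_eq_zero s _ _ _ hj
  · rw [← hc, Finset.mul_sum, ← Finset.sum_sub_distrib]
    exact Finset.sum_congr rfl fun i _ => by ring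
end

section
/- If a nonzero polynomial p ∈ R[S] of degree d (as a polynomial in S) lies in J, then there exist polynomials q₁,…,qₙ ∈ R[S], each of degree at most d−1 whenever nonzero, such that p = Σᵢ qᵢ·(S·fᵢ − gᵢ). -/
/-!
Write `p = ∑ qᵢ (S fᵢ - gᵢ)` with all `deg qᵢ < d + 1`, where `deg p ≤ d`. Comparing coefficients of
`S^(d+1)` gives `∑ aᵢ fᵢ = 0` for the coefficients `aᵢ` of `S^d` in the `qᵢ`; since `s` is linear,
also `∑ aᵢ gᵢ = s (∑ aᵢ fᵢ) = 0`. Hence the top layer `∑ aᵢ S^d (S fᵢ - gᵢ)` vanishes and can be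
removed from every `qᵢ`, which lowers the degree bound by one. Descending from any bound, we reach
`deg qᵢ < deg p`.
-/

open Polynomial

theorem Submodule.sum_smul_map_eq_zero {R M N ι : Type*} [Semiring R] [AddCommMonoid M]
    [Module R M] [AddCommMonoid N] [Module R N] [Fintype ι] (f : ι → M)
    (s : span R (Set.range f) →ₗ[R] N) (a : ι → R) (h : ∑ i, a i • f i = 0) :
    ∑ i, a i • s ⟨f i, subset_span (Set.mem_range_self i)⟩ = 0 := by
  simp_rw [← map_smul, ← map_sum]
  convert map_zero s
  ext
  simpa using h

namespace Polynomial

variable {R : Type*} [CommRing R]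

theorem coeff_mul_X_mul_C_sub_C_succ (q : R[X]) (a b : R) (m : ℕ) :
    (q * (X * C a - C b)).coeff (m + 1) = q.coeff m * a - q.coeff (m + 1) * b := by
  rw [mul_sub, ← mul_assoc, coeff_sub, coeff_mul_C, coeff_mul_C, coeff_mul_X]

theorem sum_monomial_mul_X_mul_C_sub_C {ι : Type*} [Fintype ι] (d : ℕ) (a f g : ι → R) :
    ∑ i, monomial d (a i) * (X * C (f i) - C (g i)) =
      monomial (d + 1) (∑ i, a i * f i) - monomial d (∑ i, a i * g i) := by
  simp only [mul_sub, ← mul_assoc, monomial_mul_X, monomial_mul_C, Finset.sum_sub_distrib,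
    ← map_sum]

theorem degree_erase_lt_of_degree_lt_succ {q : R[X]} {d : ℕ} (hq : q.degree < ↑(d + 1)) :
    (q.erase d).degree < d := by
  rw [degree_lt_iff_coeff_zero]
  intro m hm
  rcases (Nat.cast_le.mp hm).eq_or_lt with rfl | hlt
  · rw [coeff_erase, if_pos rfl]
  · rw [coeff_erase, if_neg hlt.ne']
    exact coeff_eq_zero_of_degree_lt (hq.trans_le (Nat.cast_le.mpr hlt))

end Polynomial

section DegreeBound

variable {R : Type*} [CommRing R] {ι : Type*} [Fintype ι] (f g : ι → R)
  (s : Ideal.span (Set.range f) →ₗ[R] R)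
  (hg : ∀ i, g i = s ⟨f i, Ideal.subset_span (Set.mem_range_self i)⟩)
include hg

theorem exists_sum_mul_X_mul_C_sub_C_of_degree_lt_succ {p : R[X]} {d : ℕ} (hpd : p.natDegree ≤ d)
    {q : ι → R[X]} (hq : ∀ i, (q i).degree < ↑(d + 1))
    (hpq : p = ∑ i, q i * (X * C (f i) - C (g i))) :
    ∃ q' : ι → R[X], (∀ i, (q' i).degree < d) ∧ p = ∑ i, q' i * (X * C (f i) - C (g i)) := by
  set a : ι → R := fun i => (q i).coeff d
  have hf : ∑ i, a i * f i = 0 := by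
    have hcoeff := congr_arg (coeff · (d + 1)) hpq
    simp only [finsetSum_coeff, coeff_mul_X_mul_C_sub_C_succ,
      coeff_eq_zero_of_degree_lt (hq _), zero_mul, sub_zero] at hcoeff
    rw [← hcoeff, coeff_eq_zero_of_natDegree_lt (Nat.lt_succ_of_le hpd)]
  have hg' : ∑ i, a i * g i = 0 := by
    simpa only [hg, smul_eq_mul] using Submodule.sum_smul_map_eq_zero f s a hf
  refine ⟨fun i => (q i).erase d, fun i => degree_erase_lt_of_degree_lt_succ (hq i), ?_⟩
  conv_lhs => rw [hpq]
  conv_lhs => enter [2, i]; rw [← monomial_add_erase (q i) d, add_mul]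
  rw [Finset.sum_add_distrib, sum_monomial_mul_X_mul_C_sub_C, hf, hg', monomial_zero_right,
    monomial_zero_right, sub_zero, zero_add]

theorem exists_sum_mul_X_mul_C_sub_C_of_degree_lt {p : R[X]} :
    ∀ (D : ℕ) (q : ι → R[X]), (∀ i, (q i).degree < D) →
      p = ∑ i, q i * (X * C (f i) - C (g i)) →
      ∃ q' : ι → R[X], (∀ i, (q' i).degree < p.natDegree) ∧
        p = ∑ i, q' i * (X * C (f i) - C (g i))
  | 0, q, hq, hpq => ⟨q, fun i => (hq i).trans_le (Nat.cast_le.mpr (Nat.zero_le _)), hpq⟩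
  | D + 1, q, hq, hpq => by
    by_cases hD : D + 1 ≤ p.natDegree
    · exact ⟨q, fun i => (hq i).trans_le (Nat.cast_le.mpr hD), hpq⟩
    · obtain ⟨q', hq', hpq'⟩ :=
        exists_sum_mul_X_mul_C_sub_C_of_degree_lt_succ f g s hg (by omega) hq hpq
      exact exists_sum_mul_X_mul_C_sub_C_of_degree_lt D q' hq' hpq'

end DegreeBound

/-- If a nonzero polynomial `p ∈ R[S]` lies in
`J = (S·f₁ - g₁, …, S·fₙ - gₙ)`, then there exist `q₁, …, qₙ ∈ R[S]`, each of degree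
strictly less than `deg p` (i.e. at most `deg p - 1` whenever nonzero), with
`p = Σᵢ qᵢ · (S·fᵢ - gᵢ)`. -/
theorem stmt_1 {R : Type} [CommRing R] {n : ℕ} (f g : Fin n → R)
    (s : ↥(Ideal.span (Set.range f)) →ₗ[R] R)
    (hg : ∀ i, g i = s ⟨f i, Ideal.subset_span (Set.mem_range_self i)⟩)
    (J : Ideal (Polynomial R))
    (hJ : J = Ideal.span (Set.range fun i => X * Polynomial.C (f i) - Polynomial.C (g i)))
    (p : Polynomial R) (hp : p ≠ 0) (hpJ : p ∈ J) :
    ∃ q : Fin n → Polynomial R,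
      (∀ i, (q i).degree < p.degree) ∧
      p = ∑ i, q i * (X * Polynomial.C (f i) - Polynomial.C (g i)) := by
  subst hJ
  obtain ⟨q, hq⟩ := Ideal.mem_span_range_iff_exists_fun.mp hpJ
  have hqD : ∀ i, (q i).degree < ↑(Finset.univ.sup (fun j => (q j).natDegree) + 1) := fun i =>
    degree_le_natDegree.trans_lt <| Nat.cast_lt.mpr <| Nat.lt_succ_of_le <|
      Finset.le_sup (f := fun j => (q j).natDegree) (Finset.mem_univ i)
  rw [degree_eq_natDegree hp]
  exact exists_sum_mul_X_mul_C_sub_C_of_degree_lt f g s hg _ q hqD hq.symm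
end

section
/- If p ∈ R ⊆ R[S] is a constant polynomial and there exists c ∈ R with S·p − c ∈ J, then p ∈ I. -/
open Polynomial

/-!
Write `S·p - c = ∑ qᵢ (S fᵢ - gᵢ) = S F - G` with `F = ∑ qᵢ fᵢ` and `G = ∑ qᵢ gᵢ`. The coefficients
of `F` lie in `I` and those of `G` are their images under `s`. Comparing coefficients of `S^(k+2)`
gives `F_(k+1) = s(F_(k+2))`, and since `F` has finitely many nonzero coefficients, a downward
induction kills every `F_(k+1)`. The coefficient of `S` then reads `p = F₀ - s(F₁) = F₀ ∈ I`.
-/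

theorem eq_zero_of_eq_apply_succ {R M : Type*} [Semiring R] [AddCommMonoid M] [Module R M]
    {N : Submodule R M} (s : N →ₗ[R] M) (u : ℕ → M) (hu : ∀ k, u k ∈ N)
    (hrec : ∀ k, u k = s ⟨u (k + 1), hu (k + 1)⟩) (hfin : ∀ᶠ k in Filter.atTop, u k = 0)
    (k : ℕ) : u k = 0 := by
  obtain ⟨D, hD⟩ := Filter.eventually_atTop.1 hfin
  suffices ∀ m k, D ≤ k + m → u k = 0 from this D k (Nat.le_add_left D k)
  intro m
  induction m with
  | zero => exact hD
  | succ m ih =>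
    intro k hk
    have hzero : (⟨u (k + 1), hu (k + 1)⟩ : N) = 0 := Subtype.ext (ih (k + 1) (by omega))
    rw [hrec, hzero, map_zero]

theorem exists_coeff_succ_eq_sub_of_mem_span {R ι : Type*} [CommRing R] [Fintype ι]
    (f g : ι → R) (s : Ideal.span (Set.range f) →ₗ[R] R)
    (hg : ∀ i, g i = s ⟨f i, Ideal.subset_span (Set.mem_range_self i)⟩) {P : R[X]}
    (hP : P ∈ Ideal.span (Set.range fun i => X * C (f i) - C (g i))) :
    ∃ F : R[X], ∃ hF : ∀ k, F.coeff k ∈ Ideal.span (Set.range f),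
      ∀ k, P.coeff (k + 1) = F.coeff k - s ⟨F.coeff (k + 1), hF (k + 1)⟩ := by
  obtain ⟨q, rfl⟩ := Ideal.mem_span_range_iff_exists_fun.1 hP
  have hcoeff (k : ℕ) : (∑ i, q i * C (f i)).coeff k = ∑ i, (q i).coeff k * f i := by
    simp only [finsetSum_coeff, coeff_mul_C]
  have hF (k : ℕ) : (∑ i, q i * C (f i)).coeff k ∈ Ideal.span (Set.range f) := by
    rw [hcoeff]
    exact Ideal.sum_mem _ fun i _ => Ideal.mul_mem_left _ _ (Ideal.subset_span ⟨i, rfl⟩)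
  have hs (k : ℕ) : s ⟨_, hF k⟩ = ∑ i, (q i).coeff k * g i := by
    have : (⟨_, hF k⟩ : Ideal.span (Set.range f)) =
        ∑ i, (q i).coeff k • ⟨f i, Ideal.subset_span (Set.mem_range_self i)⟩ := by
      ext
      simp [hcoeff]
    simp only [this, map_sum, map_smul, smul_eq_mul, hg]
  refine ⟨_, hF, fun k => ?_⟩
  rw [hs, hcoeff, ← Finset.sum_sub_distrib, finsetSum_coeff]
  refine Finset.sum_congr rfl fun i _ => ?_
  rw [mul_sub, coeff_sub, mul_left_comm, mul_comm X, coeff_mul_X, coeff_mul_C, coeff_mul_C]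

/-- If `p ∈ R ⊆ R[S]` is a constant polynomial and there exists `c ∈ R` with
`S·p - c ∈ J`, then `p ∈ I = (f₁, …, fₙ)`. -/
theorem stmt_2 {R : Type} [CommRing R] {n : ℕ} (f g : Fin n → R)
    (s : ↥(Ideal.span (Set.range f)) →ₗ[R] R)
    (hg : ∀ i, g i = s ⟨f i, Ideal.subset_span (Set.mem_range_self i)⟩)
    (J : Ideal (Polynomial R))
    (hJ : J = Ideal.span (Set.range fun i => X * Polynomial.C (f i) - Polynomial.C (g i)))
    (p c : R) (h : X * Polynomial.C p - Polynomial.C c ∈ J) :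
    p ∈ Ideal.span (Set.range f) := by
  subst hJ
  obtain ⟨F, hF, hPF⟩ := exists_coeff_succ_eq_sub_of_mem_span f g s hg h
  have hhigh (k : ℕ) : F.coeff (k + 1) = s ⟨F.coeff (k + 2), hF (k + 2)⟩ := by
    have := hPF (k + 1)
    simp only [coeff_sub, coeff_X_mul, coeff_C_succ, sub_zero] at this
    exact sub_eq_zero.1 this.symm
  have hfin : ∀ᶠ k in Filter.atTop, F.coeff (k + 1) = 0 :=
    Filter.eventually_atTop.2 ⟨F.natDegree, fun k hk => coeff_eq_zero_of_natDegree_lt (by omega)⟩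
  have hF₁ : (⟨F.coeff 1, hF 1⟩ : Ideal.span (Set.range f)) = 0 :=
    Subtype.ext (eq_zero_of_eq_apply_succ s _ (fun k => hF (k + 1)) hhigh hfin 0)
  have hp := hPF 0
  simp only [hF₁, map_zero, sub_zero, coeff_sub, coeff_X_mul, coeff_C_zero, coeff_C_succ] at hp
  exact hp ▸ hF 0
end

section
/- If p ∈ R[S] has degree at least 1 in S and there exists c ∈ R with S·p − c ∈ J, then there exists p₁ ∈ R[S] of strictly smaller degree such that p − p₁ ∈ J and S·p₁ − c ∈ J. -/
/-!
Write `S·p - c = ∑ hᵢ (S fᵢ - gᵢ)` and put `aₖ = ∑ coeff hᵢ k • fᵢ ∈ I`. Since `gᵢ = s fᵢ`, the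
coefficient of `S^(k+1)` reads `pₖ = aₖ - s aₖ₊₁`. The `aₖ` vanish for large `k` and `pₖ = 0`
above `d = deg p`, so downward induction gives `aₖ = 0` for `k > d`, hence `p_d = a_d ∈ I`.
Subtracting `S^(d-1) (S a_d - s a_d) ∈ J` from `p` then kills the leading term.
-/

open Polynomial Filter

theorem Nat.forall_gt_of_eventually_of_succ {P : ℕ → Prop} {d : ℕ} (hP : ∀ᶠ k in atTop, P k)
    (hstep : ∀ k, d < k → P (k + 1) → P k) (k : ℕ) (hk : d < k) : P k := by
  obtain ⟨N, hN⟩ := eventually_atTop.1 hP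
  exact Nat.decreasingInduction' (fun j _ hkj => hstep j (hk.trans_le hkj))
    (le_max_left k N) (hN _ (le_max_right k N))

namespace Polynomial

variable {R : Type*} [CommRing R]

theorem coeff_mul_X_mul_C_sub_C_succ_s3 (h : R[X]) (u v : R) (k : ℕ) :
    (h * (X * C u - C v)).coeff (k + 1) = h.coeff k * u - h.coeff (k + 1) * v := by
  rw [mul_sub, ← mul_assoc, coeff_sub, coeff_mul_C, coeff_mul_C, coeff_mul_X]

theorem degree_sub_X_pow_mul_lt {p : R[X]} {e : ℕ} (he : p.natDegree = e + 1) (b : R) :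
    (p - X ^ e * (X * C p.leadingCoeff - C b)).degree < p.degree := by
  have hp : p ≠ 0 := by rintro rfl; simp at he
  set a := p.leadingCoeff with ha
  have hq : (X ^ e * (X * C a - C b)).degree = ↑(e + 1) := by
    have : a ≠ 0 := leadingCoeff_ne_zero.2 hp
    compute_degree!
    exact_mod_cast Nat.lt_succ_self e
  refine degree_sub_lt_left (by rw [hq, degree_eq_natDegree hp, he]) hp ?_
  symm
  rw [leadingCoeff, natDegree_eq_of_degree_eq_some hq, add_comm, coeff_X_pow_mul]
  simp [ha]

end Polynomial

section GraphIdeal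

variable {R : Type*} [CommRing R] {n : ℕ} (f : Fin n → R)
  (s : Ideal.span (Set.range f) →ₗ[R] R)

noncomputable def graphIdeal : Ideal R[X] :=
  Ideal.span (Set.range fun i =>
    X * C (f i) - C (s ⟨f i, Ideal.subset_span (Set.mem_range_self i)⟩))

theorem X_mul_C_sub_C_mem_graphIdeal (a : Ideal.span (Set.range f)) :
    X * C (a : R) - C (s a) ∈ graphIdeal f s := by
  obtain ⟨r, hr⟩ := Ideal.mem_span_range_iff_exists_fun.1 a.2
  have ha : a = ∑ i, r i • ⟨f i, Ideal.subset_span (Set.mem_range_self i)⟩ := by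
    ext
    simp [hr]
  rw [ha, map_sum]
  simp only [map_smul, Submodule.coe_sum, Submodule.coe_smul, smul_eq_mul, map_sum, map_mul,
    Finset.mul_sum, ← Finset.sum_sub_distrib]
  refine Ideal.sum_mem _ fun i _ => ?_
  convert Ideal.mul_mem_left (graphIdeal f s) (C (r i)) (Ideal.subset_span ⟨i, rfl⟩) using 1
  ring

theorem exists_coeff_succ_eq_of_mem_graphIdeal {q : R[X]} (hq : q ∈ graphIdeal f s) :
    ∃ a : ℕ → Ideal.span (Set.range f), (∀ᶠ k in atTop, a k = 0) ∧
      ∀ k, q.coeff (k + 1) = a k - s (a (k + 1)) := by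
  obtain ⟨h, rfl⟩ := Ideal.mem_span_range_iff_exists_fun.1 hq
  refine ⟨fun k => ∑ i, (h i).coeff k • ⟨f i, Ideal.subset_span (Set.mem_range_self i)⟩, ?_, ?_⟩
  · filter_upwards [eventually_all.2 fun i => eventually_gt_atTop (h i).natDegree] with k hk
    exact Finset.sum_eq_zero fun i _ => by rw [coeff_eq_zero_of_natDegree_lt (hk i), zero_smul]
  · intro k
    simp only [finsetSum_coeff, coeff_mul_X_mul_C_sub_C_succ_s3, Finset.sum_sub_distrib, map_sum,
      map_smul, Submodule.coe_sum, Submodule.coe_smul, smul_eq_mul]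

end GraphIdeal

/-- If `p ∈ R[S]` has degree at least `1` in `S` and there exists `c ∈ R` with
`S·p - c ∈ J`, then there exists `p₁ ∈ R[S]` of strictly smaller degree with
`p - p₁ ∈ J` and `S·p₁ - c ∈ J`. -/
theorem stmt_3 {R : Type} [CommRing R] {n : ℕ} (f g : Fin n → R)
    (s : ↥(Ideal.span (Set.range f)) →ₗ[R] R)
    (hg : ∀ i, g i = s ⟨f i, Ideal.subset_span (Set.mem_range_self i)⟩)
    (J : Ideal (Polynomial R))
    (hJ : J = Ideal.span (Set.range fun i => X * Polynomial.C (f i) - Polynomial.C (g i)))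
    (p : Polynomial R) (hdeg : 1 ≤ p.natDegree) (c : R)
    (h : X * p - Polynomial.C c ∈ J) :
    ∃ p₁ : Polynomial R, p₁.degree < p.degree ∧ p - p₁ ∈ J ∧
      X * p₁ - Polynomial.C c ∈ J := by
  obtain rfl : J = graphIdeal f s := by rw [hJ, graphIdeal, funext hg]
  obtain ⟨a, ha_zero, ha⟩ := exists_coeff_succ_eq_of_mem_graphIdeal f s h
  simp only [coeff_sub, coeff_C_succ, sub_zero, coeff_X_mul] at ha
  have ha_top : ∀ k, p.natDegree < k → a k = 0 :=
    Nat.forall_gt_of_eventually_of_succ ha_zero fun k hk hk1 => by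
      simpa [coeff_eq_zero_of_natDegree_lt hk, hk1, eq_comm] using ha k
  have hlead : p.leadingCoeff = a p.natDegree := by
    simpa [ha_top _ p.natDegree.lt_succ_self] using ha p.natDegree
  obtain ⟨e, he⟩ := Nat.exists_eq_add_of_le' hdeg
  set p₁ := p - X ^ e * (X * C p.leadingCoeff - C (s (a p.natDegree)))
  have hp₁ : p - p₁ ∈ graphIdeal f s := by
    rw [sub_sub_cancel, hlead]
    exact Ideal.mul_mem_left _ _ (X_mul_C_sub_C_mem_graphIdeal f s _)
  refine ⟨p₁, degree_sub_X_pow_mul_lt he _, hp₁, ?_⟩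
  convert Ideal.sub_mem _ h (Ideal.mul_mem_left _ X hp₁) using 1
  ring
end

section
/- If p ∈ R[S] and there exists c ∈ R with S·p − c ∈ J, then there exists p₁ ∈ I ⊆ R such that p − p₁ ∈ J. In particular, in the quotient ring R[S]/J, if an element a satisfies a·s ∈ R (where s denotes the image of S), then a lies in the image of I. -/
open Polynomial

/-!
Every element of `J = (S·fᵢ - gᵢ)` can be written as `S·Q + (S·a - b)` with `Q ∈ J`, `a ∈ I`
and `b ∈ R`: split each polynomial coefficient `h` of a generator as `h = S·h' + h(0)`.
If `S·p - c ∈ J`, then `S·(p - Q - a)` is a constant, which forces `p - Q - a = 0`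
since `S` is a non-zero-divisor; so `p₁ = a` works.
-/

namespace Polynomial

variable {R : Type*} [CommRing R]

theorem eq_zero_of_X_mul_eq_C {u : R[X]} {v : R} (h : X * u = C v) : u = 0 := by
  have hv : v = 0 := by simpa using congrArg (coeff · 0) h.symm
  exact isRegular_X.left (h.trans (by simp [hv]))

variable {ι : Type*} (f g : ι → R)

theorem exists_X_mul_add_of_mem_span_X_mul_C_sub_C {q : R[X]}
    (hq : q ∈ Ideal.span (Set.range fun i => X * C (f i) - C (g i))) :
    ∃ Q ∈ Ideal.span (Set.range fun i => X * C (f i) - C (g i)),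
      ∃ a ∈ Ideal.span (Set.range f), ∃ b : R, q = X * Q + (X * C a - C b) := by
  induction hq using Submodule.span_induction with
  | mem _ hd =>
    obtain ⟨i, rfl⟩ := hd
    exact ⟨0, zero_mem _, f i, Ideal.subset_span ⟨i, rfl⟩, g i, by ring⟩
  | zero => exact ⟨0, zero_mem _, 0, zero_mem _, 0, by simp⟩
  | add _ _ _ _ hq₁ hq₂ =>
    obtain ⟨Q₁, hQ₁, a₁, ha₁, b₁, rfl⟩ := hq₁
    obtain ⟨Q₂, hQ₂, a₂, ha₂, b₂, rfl⟩ := hq₂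
    refine ⟨Q₁ + Q₂, add_mem hQ₁ hQ₂, a₁ + a₂, add_mem ha₁ ha₂, b₁ + b₂, ?_⟩
    simp only [map_add]
    ring
  | smul r q hq hq' =>
    obtain ⟨Q, hQ, a, ha, b, rfl⟩ := hq'
    refine ⟨r.divX * (X * Q + (X * C a - C b)) + C (r.coeff 0) * Q,
      add_mem (Ideal.mul_mem_left _ _ hq) (Ideal.mul_mem_left _ _ hQ),
      r.coeff 0 * a, Ideal.mul_mem_left _ _ ha, r.coeff 0 * b, ?_⟩
    conv_lhs => rw [smul_eq_mul, ← X_mul_divX_add r]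
    simp only [map_mul]
    ring

theorem exists_sub_C_mem_span_of_X_mul_sub_C_mem {p : R[X]} {c : R}
    (hp : X * p - C c ∈ Ideal.span (Set.range fun i => X * C (f i) - C (g i))) :
    ∃ p₁ ∈ Ideal.span (Set.range f),
      p - C p₁ ∈ Ideal.span (Set.range fun i => X * C (f i) - C (g i)) := by
  obtain ⟨Q, hQ, a, ha, b, h⟩ := exists_X_mul_add_of_mem_span_X_mul_C_sub_C f g hp
  have hpQa : p - Q - C a = 0 := eq_zero_of_X_mul_eq_C (v := c - b) (by
    simp only [map_sub]
    linear_combination h)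
  exact ⟨a, ha, by rwa [show p - C a = Q by linear_combination hpQa]⟩

end Polynomial

theorem stmt_4_general {R : Type} [CommRing R] {n : ℕ} (f g : Fin n → R)
    (J : Ideal (Polynomial R))
    (hJ : J = Ideal.span (Set.range fun i => X * Polynomial.C (f i) - Polynomial.C (g i))) :
    (∀ (p : Polynomial R) (c : R), X * p - Polynomial.C c ∈ J →
       ∃ p₁ ∈ Ideal.span (Set.range f), p - Polynomial.C p₁ ∈ J) ∧
    (∀ a : Polynomial R ⧸ J,
       (∃ r : R, a * Ideal.Quotient.mk J X = Ideal.Quotient.mk J (Polynomial.C r)) →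
       ∃ p₁ ∈ Ideal.span (Set.range f), a = Ideal.Quotient.mk J (Polynomial.C p₁)) := by
  have key (p : R[X]) (c : R) (hp : X * p - C c ∈ J) :
      ∃ p₁ ∈ Ideal.span (Set.range f), p - C p₁ ∈ J := by
    subst hJ
    exact exists_sub_C_mem_span_of_X_mul_sub_C_mem f g hp
  refine ⟨key, ?_⟩
  rintro a ⟨r, hr⟩
  obtain ⟨p, rfl⟩ := Ideal.Quotient.mk_surjective a
  have hpr : X * p - C r ∈ J := by
    rw [← Ideal.Quotient.eq_zero_iff_mem, map_sub, map_mul, mul_comm, hr, sub_self]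
  obtain ⟨p₁, hp₁, hpp₁⟩ := key p r hpr
  exact ⟨p₁, hp₁, Ideal.Quotient.eq.mpr hpp₁⟩

/-- If `p ∈ R[S]` and there exists `c ∈ R` with `S·p - c ∈ J`, then there exists
`p₁ ∈ I ⊆ R` with `p - p₁ ∈ J`.  In particular, in `R[S]/J`, if an element `a`
satisfies `a·s ∈ R` (where `s` is the image of `S`), then `a` lies in the image of `I`. -/
theorem stmt_4 {R : Type} [CommRing R] {n : ℕ} (f g : Fin n → R)
    (s : ↥(Ideal.span (Set.range f)) →ₗ[R] R)
    (hg : ∀ i, g i = s ⟨f i, Ideal.subset_span (Set.mem_range_self i)⟩)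
    (J : Ideal (Polynomial R))
    (hJ : J = Ideal.span (Set.range fun i => X * Polynomial.C (f i) - Polynomial.C (g i))) :
    (∀ (p : Polynomial R) (c : R), X * p - Polynomial.C c ∈ J →
       ∃ p₁ ∈ Ideal.span (Set.range f), p - Polynomial.C p₁ ∈ J) ∧
    (∀ a : Polynomial R ⧸ J,
       (∃ r : R, a * Ideal.Quotient.mk J X = Ideal.Quotient.mk J (Polynomial.C r)) →
       ∃ p₁ ∈ Ideal.span (Set.range f), a = Ideal.Quotient.mk J (Polynomial.C p₁)) :=
  stmt_4_general f g J hJ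
end

section
/- For u ∈ 𝓜 and w ∈ 𝓛 \ 𝓜, the equality r·A_uw = φ_wu(r)·(y_u + C_uw) holds in R_𝓜 for all r ∈ I_w. -/
open CategoryTheory

noncomputable section

/-- A commutative ring is Gorenstein if it is Noetherian and has finite injective
dimension as a module over itself, expressed via vanishing of `Ext^i(-, R)` for
large `i`. -/
def IsGorensteinRing (R : Type) [CommRing R] : Prop :=
  IsNoetherianRing R ∧ ∃ n : ℕ, ∀ (M : ModuleCat R) (i : ℕ), n < i →
    Subsingleton (((Ext R (ModuleCat R) i).obj (Opposite.op M)).obj (ModuleCat.of R R))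

/-- The height (codimension) of an ideal: the infimum of the heights of the primes
containing it. -/
def idealHeight {R : Type} [CommRing R] (I : Ideal R) : ℕ∞ :=
  ⨅ (P : PrimeSpectrum R) (_ : I ≤ P.asIdeal), Order.height P

/-- The ideal of relations defining the parallel unprojection ring `R_𝓜`:
the quotient of `R[y_u : u ∈ 𝓜]` by the relations `y_u·r - φ_u(r)` for `r ∈ I_u`
and `(y_v + C_vu)(y_u + C_uv) - A_vu` for distinct `u, v ∈ 𝓜`. -/
def unprojIdeal {R 𝓛 : Type} [CommRing R] (I : 𝓛 → Ideal R)
    (φ : ∀ a, ↥(I a) →ₗ[R] R) (cc AA : 𝓛 → 𝓛 → R) (𝓜 : Set 𝓛) :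
    Ideal (MvPolynomial ↥𝓜 R) :=
  Ideal.span
    ({p | ∃ (u : 𝓜) (r : ↥(I ↑u)), p =
        MvPolynomial.X u * MvPolynomial.C (r : R) - MvPolynomial.C (φ ↑u r)} ∪
     {p | ∃ u v : 𝓜, (u : 𝓛) ≠ ↑v ∧ p =
        (MvPolynomial.X v + MvPolynomial.C (cc ↑v ↑u)) *
        (MvPolynomial.X u + MvPolynomial.C (cc ↑u ↑v)) - MvPolynomial.C (AA ↑v ↑u)})

/-- The unprojection ideal `J_{𝓜,w} ⊆ R_𝓜`: generated by the images of `I_w`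
and of the elements `y_u + C_uw` for `u ∈ 𝓜`. -/
def Junproj {R 𝓛 : Type} [CommRing R] (I : 𝓛 → Ideal R)
    (φ : ∀ a, ↥(I a) →ₗ[R] R) (cc AA : 𝓛 → 𝓛 → R) (𝓜 : Set 𝓛) (w : 𝓛) :
    Ideal (MvPolynomial ↥𝓜 R ⧸ unprojIdeal I φ cc AA 𝓜) :=
  Ideal.span
    ((fun r : R => Ideal.Quotient.mk (unprojIdeal I φ cc AA 𝓜) (MvPolynomial.C r)) ''
        (I w : Set R) ∪
     Set.range fun u : 𝓜 =>
        Ideal.Quotient.mk (unprojIdeal I φ cc AA 𝓜)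
          (MvPolynomial.X u + MvPolynomial.C (cc ↑u w)))

open MvPolynomial

section UnprojectionRing

variable {R 𝓛 : Type} [CommRing R] (I : 𝓛 → Ideal R) (φ : ∀ a, ↥(I a) →ₗ[R] R)
  (cc AA : 𝓛 → 𝓛 → R) {𝓜 : Set 𝓛}

theorem unprojIdeal.mk_X_mul_C (u : 𝓜) (s : ↥(I u)) :
    Ideal.Quotient.mk (unprojIdeal I φ cc AA 𝓜) (X u) *
        Ideal.Quotient.mk (unprojIdeal I φ cc AA 𝓜) (C (s : R)) =
      Ideal.Quotient.mk (unprojIdeal I φ cc AA 𝓜) (C (φ u s)) := by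
  rw [← map_mul, Ideal.Quotient.mk_eq_mk_iff_sub_mem]
  exact Ideal.subset_span (Or.inl ⟨u, s, rfl⟩)

theorem unprojIdeal.mk_C_apply_add_mul (u : 𝓜) (s : ↥(I u)) (c : R) :
    Ideal.Quotient.mk (unprojIdeal I φ cc AA 𝓜) (C (φ u s + c * s)) =
      Ideal.Quotient.mk (unprojIdeal I φ cc AA 𝓜) (C (s : R)) *
        (Ideal.Quotient.mk (unprojIdeal I φ cc AA 𝓜) (X u) +
          Ideal.Quotient.mk (unprojIdeal I φ cc AA 𝓜) (C c)) := by
  rw [map_add, map_add, map_mul, map_mul, ← unprojIdeal.mk_X_mul_C]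
  ring

end UnprojectionRing

theorem stmt_11_general
    {R : Type} [CommRing R]
    {𝓛 : Type}
    (I : 𝓛 → Ideal R)
    (φ : ∀ a, ↥(I a) →ₗ[R] R)
    (cc : 𝓛 → 𝓛 → R)
    (hcc : ∀ a b (_ : a ≠ b) (x : ↥(I a)), φ a x + cc a b * ↑x ∈ I b)
    (AA : 𝓛 → 𝓛 → R)
    (hAA : ∀ a b (hab : a ≠ b) (x : ↥(I a)),
      φ b ⟨φ a x + cc a b * ↑x, hcc a b hab x⟩ + cc b a * (φ a x + cc a b * ↑x)
        = AA a b * ↑x)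
    (𝓜 : Set 𝓛) (u : 𝓛) (hu : u ∈ 𝓜) (w : 𝓛) (hw : w ∉ 𝓜) (r : ↥(I w)) :
    Ideal.Quotient.mk (unprojIdeal I φ cc AA 𝓜) (MvPolynomial.C ((r : R) * AA w u)) =
      Ideal.Quotient.mk (unprojIdeal I φ cc AA 𝓜) (MvPolynomial.C (φ w r + cc w u * ↑r)) *
        (Ideal.Quotient.mk (unprojIdeal I φ cc AA 𝓜) (MvPolynomial.X (⟨u, hu⟩ : ↥𝓜)) + Ideal.Quotient.mk (unprojIdeal I φ cc AA 𝓜) (MvPolynomial.C (cc u w))) := by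
  have hwu : w ≠ u := fun h => hw (h ▸ hu)
  rw [mul_comm, ← hAA w u hwu r]
  exact unprojIdeal.mk_C_apply_add_mul I φ cc AA (𝓜 := 𝓜) ⟨u, hu⟩ ⟨_, hcc w u hwu r⟩ (cc u w)

/-- Lemma 2.15: for `u ∈ 𝓜` and `w ∈ 𝓛 \ 𝓜`, the equality
`r·A_uw = φ_wu(r)·(y_u + C_uw)` holds in `R_𝓜` for all `r ∈ I_w`. -/
theorem stmt_11
    {K R : Type} [Field K] [CommRing R] [Algebra K R]
    (𝒜 : ℕ → Submodule K R) [GradedAlgebra 𝒜]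
    (h0 : ∀ x ∈ 𝒜 0, ∃ c : K, algebraMap K R c = x)
    (hGor : IsGorensteinRing R)
    {𝓛 : Type} [Fintype 𝓛] [Nonempty 𝓛]
    (I : 𝓛 → Ideal R)
    (hIhom : ∀ a, (I a).IsHomogeneous 𝒜)
    (hIht : ∀ a, idealHeight (I a) = 1)
    (hIGor : ∀ a, IsGorensteinRing (R ⧸ I a))
    (hht2 : ∀ a b, a ≠ b → 2 ≤ idealHeight (I a ⊔ I b))
    (φ : ∀ a, ↥(I a) →ₗ[R] R) (d : 𝓛 → ℕ) (hd : ∀ a, 0 < d a)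
    (hφgr : ∀ a (n : ℕ) (x : ↥(I a)), (x : R) ∈ 𝒜 n → φ a x ∈ 𝒜 (n + d a))
    (hgen : ∀ a, Submodule.span R {(I a).subtype, φ a} = ⊤)
    (cc : 𝓛 → 𝓛 → R)
    (hcchom : ∀ a b, a ≠ b → cc a b ∈ 𝒜 (d a))
    (hcc : ∀ a b (_ : a ≠ b) (x : ↥(I a)), φ a x + cc a b * ↑x ∈ I b)
    (AA : 𝓛 → 𝓛 → R)
    (hAA : ∀ a b (hab : a ≠ b) (x : ↥(I a)),
      φ b ⟨φ a x + cc a b * ↑x, hcc a b hab x⟩ + cc b a * (φ a x + cc a b * ↑x)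
        = AA a b * ↑x)
    (𝓜 : Set 𝓛) (u : 𝓛) (hu : u ∈ 𝓜) (w : 𝓛) (hw : w ∉ 𝓜) (r : ↥(I w)) :
    Ideal.Quotient.mk (unprojIdeal I φ cc AA 𝓜) (MvPolynomial.C ((r : R) * AA w u)) =
      Ideal.Quotient.mk (unprojIdeal I φ cc AA 𝓜) (MvPolynomial.C (φ w r + cc w u * ↑r)) *
        (Ideal.Quotient.mk (unprojIdeal I φ cc AA 𝓜) (MvPolynomial.X (⟨u, hu⟩ : ↥𝓜)) + Ideal.Quotient.mk (unprojIdeal I φ cc AA 𝓜) (MvPolynomial.C (cc u w))) :=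
  stmt_11_general I φ cc hcc AA hAA 𝓜 u hu w hw r
end
end

section
/- The sequence f₁,…,f_{n−1} is a regular sequence in S, where f_m = Σ_{l=1}^n a_{ml}·X_l and X_i = x_{i1}x_{i2}···x_{i k_i}, provided the coefficients a_{ml} ∈ 𝕂 are general (e.g., all maximal minors of the coefficient matrix are nonzero). -/
/-!
Substituting `yᵢ ↦ Xᵢ = x_{i1} ⋯ x_{ikᵢ}` makes `S` a free module over `𝕂[y₁, …, yₙ]`: since
every `kᵢ ≥ 1`, each monomial of `S` factors uniquely as a monomial in the `Xᵢ` times a monomial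
divisible by no `Xᵢ`, and the latter form a basis. Flat base change therefore carries regular
sequences of `𝕂[y]` to regular sequences of `S`, and `f_m` is the image of the linear form
`g_m = Σ_l a_{ml} y_l`. Completing `(a_{ml})` by the row `(0, …, 0, 1)` gives an invertible
matrix (its determinant is the minor omitting the last column), so a linear change of coordinates
carries `y₁, …, y_{n-1}` to `g₁, …, g_{n-1}`; variables form a regular sequence. Finally all `f_m`
have zero constant term, so they generate a proper ideal.
-/

open Pointwise RingTheory.Sequence

namespace RingTheory.Sequence

variable {R S : Type*} [CommRing R] [CommRing S]

theorem IsWeaklyRegular.cons_of_ker_eq_span {φ : R →+* S} (hφ : Function.Surjective φ) {r : R}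
    (hker : RingHom.ker φ = Ideal.span {r}) (hr : IsSMulRegular R r) {rs : List R}
    (h : IsWeaklyRegular S (rs.map φ)) : IsWeaklyRegular R (r :: rs) := by
  let _ : Algebra R S := φ.toAlgebra
  have hsmul : (r • ⊤ : Submodule R R) = RingHom.ker (algebraMap R S) := by
    rw [← Submodule.ideal_span_singleton_smul, Ideal.smul_eq_mul, Ideal.mul_top]
    exact hker.symm
  let e : QuotSMulTop r R ≃ₗ[R] S := (Submodule.quotEquivOfEq _ _ hsmul).trans
    (Ideal.quotientKerAlgEquivOfSurjective (f := Algebra.ofId R S) hφ).toLinearEquiv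
  exact .cons hr <| (e.isWeaklyRegular_congr rs).mpr <|
    (isWeaklyRegular_map_algebraMap_iff S S rs).mp h

theorem IsWeaklyRegular.of_append_left {rs₁ rs₂ : List R}
    (h : IsWeaklyRegular R (rs₁ ++ rs₂)) : IsWeaklyRegular R rs₁ :=
  ((isWeaklyRegular_append_iff R rs₁ rs₂).mp h).1

theorem IsWeaklyRegular.of_ringEquiv (e : R ≃+* S) {rs : List R}
    (h : IsWeaklyRegular R rs) : IsWeaklyRegular S (rs.map e) :=
  (e.toAddEquiv.isWeaklyRegular_congr <| List.forall₂_map_right_iff.mpr <|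
    List.forall₂_same.mpr fun r _ x => map_mul e r x).mp h

theorem IsWeaklyRegular.isRegular_of_forall_mem {rs : List R} (h : IsWeaklyRegular R rs)
    {I : Ideal R} (hI : I ≠ ⊤) (hrs : ∀ r ∈ rs, r ∈ I) : IsRegular R rs := by
  refine ⟨h, fun htop => hI (eq_top_iff.mpr ?_)⟩
  rw [htop, Ideal.smul_eq_mul, Ideal.mul_top, Ideal.ofList, Ideal.span_le]
  exact hrs

end RingTheory.Sequence

namespace Polynomial

theorem isWeaklyRegular_X_cons_map_C {R : Type*} [CommRing R] {rs : List R}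
    (h : IsWeaklyRegular R rs) : IsWeaklyRegular R[X] (X :: rs.map C) := by
  refine .cons_of_ker_eq_span (φ := evalRingHom 0) (fun r => ⟨C r, eval_C⟩) ?_
    isRegular_X.left.isSMulRegular ?_
  · rw [ker_evalRingHom, map_zero, sub_zero]
  · simpa [List.map_map, Function.comp_def] using h

end Polynomial

theorem Matrix.det_of_snoc_single_last {R : Type*} [CommRing R] {n : ℕ}
    (a : Fin n → Fin (n + 1) → R) :
    (Matrix.of (Fin.snoc a (Pi.single (Fin.last n) 1))).det =
      (Matrix.of fun m i => a m i.castSucc).det := by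
  rw [Matrix.det_succ_row _ (Fin.last n), Fintype.sum_eq_single (Fin.last n)]
  · simp [Matrix.submatrix, Fin.succAbove_last]
  · intro j hj
    simp [hj]

namespace MvPolynomial

section LinearForms

variable {R : Type*} [CommRing R]

theorem isWeaklyRegular_ofFn_X (n : ℕ) :
    IsWeaklyRegular (MvPolynomial (Fin n) R) (List.ofFn (X (R := R) (σ := Fin n))) := by
  induction n with
  | zero => simp
  | succ n ih =>
    have hlist : (Polynomial.X :: (List.ofFn X).map Polynomial.C).map (finSuccEquiv R n).symm =
        List.ofFn (X (R := R) (σ := Fin (n + 1))) := by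
      rw [List.ofFn_succ, List.map_cons, List.map_map, List.map_ofFn]
      congr 1
      · exact (finSuccEquiv R n).symm_apply_eq.mpr finSuccEquiv_X_zero.symm
      · congr 1
        funext i
        exact (finSuccEquiv R n).symm_apply_eq.mpr finSuccEquiv_X_succ.symm
    rw [← hlist]
    exact (Polynomial.isWeaklyRegular_X_cons_map_C ih).of_ringEquiv
      (finSuccEquiv R n).toRingEquiv.symm

variable {ι : Type*} [Fintype ι]

noncomputable def linearSubst (M : Matrix ι ι R) : MvPolynomial ι R →ₐ[R] MvPolynomial ι R :=
  aeval fun i => ∑ j, C (M i j) * X j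

theorem linearSubst_X (M : Matrix ι ι R) (i : ι) :
    linearSubst M (X i) = ∑ j, C (M i j) * X j :=
  aeval_X _ _

theorem linearSubst_mul (M N : Matrix ι ι R) :
    linearSubst (M * N) = (linearSubst N).comp (linearSubst M) := by
  refine algHom_ext fun i => ?_
  simp only [AlgHom.comp_apply, linearSubst_X, map_sum, map_mul, algHom_C, algebraMap_eq,
    Matrix.mul_apply, Finset.sum_mul, Finset.mul_sum, mul_assoc]
  exact Finset.sum_comm

theorem linearSubst_one [DecidableEq ι] : linearSubst (1 : Matrix ι ι R) = AlgHom.id R _ := by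
  refine algHom_ext fun i => ?_
  simp [linearSubst_X, Matrix.one_apply]

noncomputable def linearSubstEquiv [DecidableEq ι] (M : (Matrix ι ι R)ˣ) :
    MvPolynomial ι R ≃ₐ[R] MvPolynomial ι R :=
  AlgEquiv.ofAlgHom (linearSubst M) (linearSubst ↑M⁻¹)
    (by rw [← linearSubst_mul, M.inv_mul, linearSubst_one])
    (by rw [← linearSubst_mul, M.mul_inv, linearSubst_one])

theorem isWeaklyRegular_ofFn_linearForms {n : ℕ} (a : Fin n → Fin (n + 1) → R)
    (ha : IsUnit (Matrix.of fun m i => a m i.castSucc).det) :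
    IsWeaklyRegular (MvPolynomial (Fin (n + 1)) R)
      (List.ofFn fun m => ∑ l, C (a m l) * X l) := by
  let M : Matrix (Fin (n + 1)) (Fin (n + 1)) R :=
    Matrix.of (Fin.snoc a (Pi.single (Fin.last n) 1))
  have hM : IsUnit M :=
    (Matrix.isUnit_iff_isUnit_det M).mpr (by rwa [Matrix.det_of_snoc_single_last])
  have hX : IsWeaklyRegular (MvPolynomial (Fin (n + 1)) R)
      (List.ofFn fun m : Fin n => X m.castSucc) :=
    .of_append_left (rs₂ := [X (Fin.last n)]) <| by
      rw [← List.concat_eq_append, ← List.ofFn_succ']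
      exact isWeaklyRegular_ofFn_X (n + 1)
  have hforms : (List.ofFn fun m : Fin n => X m.castSucc).map (linearSubstEquiv hM.unit) =
      List.ofFn fun m => ∑ l, C (a m l) * X l := by
    rw [List.map_ofFn]
    congr 1
    funext m
    simp [linearSubstEquiv, linearSubst_X, M]
  rw [← hforms]
  exact hX.of_ringEquiv (linearSubstEquiv hM.unit).toRingEquiv

end LinearForms

section BlockProduct

variable {R ι : Type*} [CommRing R] [Fintype ι] (k : ι → ℕ)

noncomputable def blockProduct : MvPolynomial ι R →ₐ[R] MvPolynomial (Σ i, Fin (k i)) R :=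
  aeval fun i => ∏ j, X ⟨i, j⟩

noncomputable def spreadExponent (q : ι →₀ ℕ) : (Σ i, Fin (k i)) →₀ ℕ :=
  Finsupp.equivFunOnFinite.symm fun s => q s.1

@[simp]
theorem spreadExponent_apply (q : ι →₀ ℕ) (s : Σ i, Fin (k i)) :
    spreadExponent k q s = q s.1 :=
  rfl

theorem blockProduct_monomial_one (q : ι →₀ ℕ) :
    blockProduct k (monomial q (1 : R)) = monomial (spreadExponent k q) 1 := by
  rw [blockProduct, aeval_monomial, map_one, one_mul, monomial_eq, C_1, one_mul,
    Finsupp.prod_fintype _ _ fun _ => pow_zero _, Finsupp.prod_fintype _ _ fun _ => pow_zero _,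
    Fintype.prod_sigma]
  simp only [spreadExponent_apply, Finset.prod_pow]

def blockReduced : Set ((Σ i, Fin (k i)) →₀ ℕ) := {d | ∀ i, ∃ j, d ⟨i, j⟩ = 0}

variable [∀ i, NeZero (k i)]

noncomputable def blockMin (e : (Σ i, Fin (k i)) →₀ ℕ) : ι →₀ ℕ :=
  Finsupp.equivFunOnFinite.symm fun i =>
    Finset.univ.inf' Finset.univ_nonempty fun j => e ⟨i, j⟩

variable {k}

theorem blockMin_apply (e : (Σ i, Fin (k i)) →₀ ℕ) (i : ι) :
    blockMin k e i = Finset.univ.inf' Finset.univ_nonempty fun j => e ⟨i, j⟩ :=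
  rfl

theorem spreadExponent_blockMin_le (e : (Σ i, Fin (k i)) →₀ ℕ) :
    spreadExponent k (blockMin k e) ≤ e := fun s =>
  Finset.inf'_le _ (Finset.mem_univ s.2)

theorem sub_spreadExponent_blockMin_mem (e : (Σ i, Fin (k i)) →₀ ℕ) :
    e - spreadExponent k (blockMin k e) ∈ blockReduced k := fun i => by
  obtain ⟨j, -, hj⟩ := Finset.exists_mem_eq_inf' Finset.univ_nonempty fun j => e ⟨i, j⟩
  exact ⟨j, by simp [blockMin, hj]⟩

theorem blockMin_add_spreadExponent {d : (Σ i, Fin (k i)) →₀ ℕ} (hd : d ∈ blockReduced k)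
    (q : ι →₀ ℕ) : blockMin k (d + spreadExponent k q) = q := by
  ext i
  obtain ⟨j, hj⟩ := hd i
  rw [blockMin_apply]
  refine le_antisymm ((Finset.inf'_le _ (Finset.mem_univ j)).trans (by simp [hj])) ?_
  exact Finset.le_inf' _ _ fun j _ => by simp

variable (k) in
noncomputable def exponentEquiv : blockReduced k × (ι →₀ ℕ) ≃ ((Σ i, Fin (k i)) →₀ ℕ) where
  toFun p := spreadExponent k p.2 + p.1
  invFun e :=
    (⟨e - spreadExponent k (blockMin k e), sub_spreadExponent_blockMin_mem e⟩, blockMin k e)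
  left_inv := fun ⟨⟨d, hd⟩, q⟩ => by
    simp only [add_comm (spreadExponent k q), blockMin_add_spreadExponent hd,
      add_tsub_cancel_right]
  right_inv e := add_tsub_cancel_of_le (spreadExponent_blockMin_le e)

variable (R k) in
theorem blockProduct_flat : (blockProduct (R := R) k).toRingHom.Flat := by
  let _ : Algebra (MvPolynomial ι R) (MvPolynomial (Σ i, Fin (k i)) R) :=
    (blockProduct k).toRingHom.toAlgebra
  let L : (blockReduced k →₀ MvPolynomial ι R) →ₗ[MvPolynomial ι R]
      MvPolynomial (Σ i, Fin (k i)) R :=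
    Finsupp.linearCombination _ fun d => monomial d.1 1
  let b : Module.Basis (Σ _ : blockReduced k, ι →₀ ℕ) R (blockReduced k →₀ MvPolynomial ι R) :=
    Finsupp.basis fun _ => basisMonomials ι R
  -- Over `R`, `L` maps the monomial basis onto the monomial basis, reindexed by `exponentEquiv`.
  have hL : L.restrictScalars R = (b.equiv (basisMonomials _ R)
      ((Equiv.sigmaEquivProd _ _).trans (exponentEquiv k))).toLinearMap := by
    refine b.ext fun ⟨d, q⟩ => ?_
    rw [LinearMap.restrictScalars_apply, LinearEquiv.coe_coe, Module.Basis.equiv_apply]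
    simp only [b, Finsupp.coe_basis, coe_basisMonomials, L, Finsupp.linearCombination_single]
    rw [Algebra.smul_def, RingHom.algebraMap_toAlgebra, AlgHom.toRingHom_eq_coe,
      RingHom.coe_coe, blockProduct_monomial_one, monomial_mul, one_mul]
    rfl
  have hbij : Function.Bijective L := by
    rw [show ⇑L = ⇑(L.restrictScalars R) from rfl, hL]
    exact LinearEquiv.bijective _
  have : Module.Free _ _ := Module.Free.of_equiv (LinearEquiv.ofBijective L hbij)
  exact Module.Flat.of_free

theorem _root_.RingTheory.Sequence.IsWeaklyRegular.map_blockProduct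
    {rs : List (MvPolynomial ι R)} (h : IsWeaklyRegular (MvPolynomial ι R) rs) :
    IsWeaklyRegular (MvPolynomial (Σ i, Fin (k i)) R) (rs.map (blockProduct k)) := by
  let _ : Algebra (MvPolynomial ι R) (MvPolynomial (Σ i, Fin (k i)) R) :=
    (blockProduct k).toRingHom.toAlgebra
  have : Module.Flat (MvPolynomial ι R) (MvPolynomial (Σ i, Fin (k i)) R) :=
    blockProduct_flat R k
  exact h.of_flat

end BlockProduct

end MvPolynomial

open MvPolynomial

theorem stmt_15_general {𝕂 : Type} [Field 𝕂] (n₀ : ℕ)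
    (k : Fin (n₀ + 1) → ℕ) (hk : ∀ i, 1 ≤ k i)
    (a : Fin n₀ → Fin (n₀ + 1) → 𝕂)
    (hminors : ∀ j : Fin (n₀ + 1),
      (Matrix.of fun m i : Fin n₀ => a m (j.succAbove i)).det ≠ 0)
    (f : Fin n₀ → MvPolynomial (Σ i : Fin (n₀ + 1), Fin (k i)) 𝕂)
    (hf : ∀ m, f m = ∑ l : Fin (n₀ + 1),
      MvPolynomial.C (a m l) * ∏ j : Fin (k l), MvPolynomial.X ⟨l, j⟩) :
    RingTheory.Sequence.IsRegular (MvPolynomial (Σ i : Fin (n₀ + 1), Fin (k i)) 𝕂)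
      (List.ofFn f) := by
  have : ∀ i, NeZero (k i) := fun i => NeZero.of_pos (hk i)
  have hlin := isWeaklyRegular_ofFn_linearForms a
    (isUnit_iff_ne_zero.mpr (by simpa [Fin.succAbove_last] using hminors (Fin.last n₀)))
  have hmap : (List.ofFn fun m => ∑ l, C (a m l) * X l).map (blockProduct k) = List.ofFn f := by
    rw [List.map_ofFn]
    congr 1
    funext m
    simp [hf, blockProduct]
  refine (hmap ▸ hlin.map_blockProduct).isRegular_of_forall_mem
    (RingHom.ker_ne_top (constantCoeff (R := 𝕂))) ?_
  simp [List.mem_ofFn, hf, zero_pow (NeZero.ne _)]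

/-- In `S = 𝕂[x_ij : 1 ≤ i ≤ n, 1 ≤ j ≤ kᵢ]` with `n ≥ 2` and all `kᵢ ≥ 1`, the
polynomials `f_m = Σ_l a_ml · X_l` (where `X_i = x_i1 ⋯ x_ikᵢ`), `1 ≤ m ≤ n−1`,
form a regular sequence, provided all maximal minors of the `(n−1) × n`
coefficient matrix `(a_ml)` are nonzero.  Here we write `n = n₀ + 1`, so that
there are `n₀ = n − 1` forms in `n₀ + 1 ≥ 2` blocks of variables. -/
theorem stmt_15 {𝕂 : Type} [Field 𝕂] (n₀ : ℕ) (hn : 1 ≤ n₀)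
    (k : Fin (n₀ + 1) → ℕ) (hk : ∀ i, 1 ≤ k i)
    (a : Fin n₀ → Fin (n₀ + 1) → 𝕂)
    (hminors : ∀ j : Fin (n₀ + 1),
      (Matrix.of fun m i : Fin n₀ => a m (j.succAbove i)).det ≠ 0)
    (f : Fin n₀ → MvPolynomial (Σ i : Fin (n₀ + 1), Fin (k i)) 𝕂)
    (hf : ∀ m, f m = ∑ l : Fin (n₀ + 1),
      MvPolynomial.C (a m l) * ∏ j : Fin (k l), MvPolynomial.X ⟨l, j⟩) :
    RingTheory.Sequence.IsRegular (MvPolynomial (Σ i : Fin (n₀ + 1), Fin (k i)) 𝕂)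
      (List.ofFn f) :=
  stmt_15_general n₀ k hk a hminors f hf
end

section
/- Let u, v ∈ M₁×···×Mₙ be such that u and v differ in at least two coordinates, i.e., there exist i₁ < i₂ with u_{i₁} ≠ v_{i₁} and u_{i₂} ≠ v_{i₂}. Then codim_R(I_u + I_v) ≥ 3 and φ_u(I_u) ⊆ I_v. -/
/-!
Modulo `J`, the ideal `I_u + I_v` is the image of the prime of `S` generated by the `n₀ + 3`
distinct variables `x_{i,u_i}`, `x_{i₁,v_{i₁}}`, `x_{i₂,v_{i₂}}`, a prime of height `n₀ + 3`.
Krull's height theorem, in the form `ht Q ≤ ht (Q/J) + μ(J)`, with `μ(J) ≤ n₀` leaves height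
at least `3` for every prime of `R = S/J` over `I_u + I_v`. The inclusion `φ_u(I_u) ⊆ I_v` is a
divisibility: if `u` and `v` differ at `i₀ ≠ i`, the monomial `∏_{b ≠ i} X_b / u_b` is divisible
by `x_{i₀,v_{i₀}}`.
-/

open MvPolynomial

noncomputable section

namespace MvPolynomial

variable {R σ : Type*} [CommRing R]

theorem span_X_image_eq_ker_aeval (s : Set σ) [DecidablePred (· ∈ s)] :
    Ideal.span (X '' s : Set (MvPolynomial σ R)) =
      RingHom.ker (aeval (R := R) fun i => if i ∈ s then 0 else (X i : MvPolynomial σ R)) := by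
  set I := Ideal.span (X '' s : Set (MvPolynomial σ R))
  set φ : MvPolynomial σ R →ₐ[R] MvPolynomial σ R := aeval fun i => if i ∈ s then 0 else X i
  have hφ : (Ideal.Quotient.mkₐ R I).comp φ = Ideal.Quotient.mkₐ R I := by
    refine algHom_ext fun i => ?_
    by_cases hi : i ∈ s
    · simp only [AlgHom.comp_apply, aeval_X, φ, hi, if_true, map_zero]
      exact (Ideal.Quotient.eq_zero_iff_mem.2
        (Ideal.subset_span (Set.mem_image_of_mem X hi))).symm
    · simp [φ, hi]
  refine le_antisymm (Ideal.span_le.2 ?_) fun g hg => ?_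
  · rintro _ ⟨i, hi, rfl⟩
    simp [φ, hi]
  · rw [← Ideal.Quotient.eq_zero_iff_mem, ← Ideal.Quotient.mkₐ_eq_mk R, ← hφ]
    simp [RingHom.mem_ker.1 hg]

theorem isPrime_span_X_image [IsDomain R] (s : Set σ) :
    (Ideal.span (X '' s : Set (MvPolynomial σ R))).IsPrime := by
  classical
  rw [span_X_image_eq_ker_aeval]
  exact RingHom.ker_isPrime _

theorem X_notMem_span_X_image [Nontrivial R] {s : Set σ} {i : σ} (hi : i ∉ s) :
    (X i : MvPolynomial σ R) ∉ Ideal.span (X '' s) := by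
  classical
  simp [span_X_image_eq_ker_aeval, hi, X_ne_zero]

theorem card_le_height_span_X_image [IsDomain R] [DecidableEq σ] (T : Finset σ) :
    (T.card : ℕ∞) ≤ (Ideal.span (X '' T : Set (MvPolynomial σ R))).height := by
  induction T using Finset.induction_on with
  | empty => simp
  | insert i T hi ih =>
    have := isPrime_span_X_image (R := R) (T : Set σ)
    have := isPrime_span_X_image (R := R) (↑(insert i T) : Set σ)
    have hlt : Ideal.span (X '' T : Set (MvPolynomial σ R)) < Ideal.span (X '' ↑(insert i T)) :=
      SetLike.lt_iff_le_and_exists.2 ⟨Ideal.span_mono (by gcongr; simp),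
        X i, Ideal.subset_span (by simp), X_notMem_span_X_image (by simpa using hi)⟩
    rw [Finset.card_insert_of_notMem hi, Nat.cast_succ]
    exact (add_le_add_left ih 1).trans (Ideal.height_add_one_le_of_lt_of_isPrime hlt)

end MvPolynomial

theorem Ideal.le_height_map_quotient {S : Type*} [CommRing S] [IsNoetherianRing S]
    {J Q : Ideal S} [Q.IsPrime] (hJQ : J ≤ Q) {m n : ℕ} (hJ : J.spanFinrank ≤ n)
    (hQ : ((n + m : ℕ) : ℕ∞) ≤ Q.height) : (m : ℕ∞) ≤ (Q.map (Ideal.Quotient.mk J)).height := by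
  have := (hQ.trans (Ideal.height_le_height_add_spanFinrank_of_le hJQ)).trans
    (add_le_add_right (Nat.cast_le.2 hJ) _)
  rw [Nat.cast_add, add_comm] at this
  exact (ENat.add_le_add_iff_right (ENat.natCast_ne_top n)).1 this

theorem Submodule.spanFinrank_span_range_le_card {R M ι : Type*} [Semiring R] [AddCommMonoid M]
    [Module R M] [Fintype ι] (f : ι → M) :
    (span R (Set.range f)).spanFinrank ≤ Fintype.card ι := by
  refine (spanFinrank_span_le_ncard_of_finite (Set.finite_range f)).trans ?_
  rw [← Set.image_univ, ← Nat.card_eq_fintype_card, ← Set.ncard_univ]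
  exact Set.ncard_image_le Set.finite_univ

section Blocks

variable {ι : Type*} [Fintype ι] {κ : ι → Type*}

theorem card_insert_insert_image_sigmaMk [DecidableEq (Σ i, κ i)] (u : ∀ i, κ i) {i₁ i₂ : ι}
    (h : i₁ ≠ i₂) {w₁ : κ i₁} {w₂ : κ i₂} (hw₁ : u i₁ ≠ w₁) (hw₂ : u i₂ ≠ w₂) :
    (insert ⟨i₁, w₁⟩ (insert ⟨i₂, w₂⟩
      (Finset.univ.image fun i => (⟨i, u i⟩ : Σ i, κ i)))).card = Fintype.card ι + 2 := by
  rw [Finset.card_insert_of_notMem, Finset.card_insert_of_notMem,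
    Finset.card_image_of_injective _ fun a b hab => congrArg Sigma.fst hab, Finset.card_univ]
  · simpa using hw₂
  · simpa [h] using hw₁

theorem X_dvd_prod_prod_erase {R : Type*} [CommSemiring R] [DecidableEq ι]
    [∀ i, Fintype (κ i)] [∀ i, DecidableEq (κ i)] (u : ∀ i, κ i) {i i₀ : ι} (h : i₀ ≠ i)
    {w : κ i₀} (hw : w ≠ u i₀) :
    (X ⟨i₀, w⟩ : MvPolynomial (Σ i, κ i) R) ∣
      ∏ b ∈ Finset.univ.erase i, ∏ j ∈ Finset.univ.erase (u b), X ⟨b, j⟩ := by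
  have h₁ := Finset.dvd_prod_of_mem (fun j => (X ⟨i₀, j⟩ : MvPolynomial (Σ i, κ i) R))
    (Finset.mem_erase.2 ⟨hw, Finset.mem_univ w⟩)
  have h₂ := Finset.dvd_prod_of_mem
    (fun b => ∏ j ∈ Finset.univ.erase (u b), (X ⟨b, j⟩ : MvPolynomial (Σ i, κ i) R))
    (Finset.mem_erase.2 ⟨h, Finset.mem_univ i₀⟩)
  exact h₁.trans h₂

end Blocks

theorem three_le_idealHeight_sup {K ι : Type} [Field K] [Fintype ι] {κ : ι → Type}
    [∀ i, Fintype (κ i)] (J : Ideal (MvPolynomial (Σ i, κ i) K))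
    (hJ : J.spanFinrank < Fintype.card ι) (u v : ∀ i, κ i)
    (huv : ∃ i₁ i₂ : ι, i₁ ≠ i₂ ∧ u i₁ ≠ v i₁ ∧ u i₂ ≠ v i₂) :
    3 ≤ idealHeight
      (Ideal.span (Set.range fun i => Ideal.Quotient.mk J (X ⟨i, u i⟩)) ⊔
        Ideal.span (Set.range fun i => Ideal.Quotient.mk J (X ⟨i, v i⟩))) := by
  classical
  obtain ⟨i₁, i₂, h12, hv1, hv2⟩ := huv
  refine le_iInf₂ fun P hP => ?_
  set Q := P.asIdeal.comap (Ideal.Quotient.mk J)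
  have hu (i : ι) : X ⟨i, u i⟩ ∈ Q :=
    hP (Ideal.mem_sup_left (Ideal.subset_span (Set.mem_range_self i)))
  have hv (i : ι) : X ⟨i, v i⟩ ∈ Q :=
    hP (Ideal.mem_sup_right (Ideal.subset_span (Set.mem_range_self i)))
  set T := insert ⟨i₁, v i₁⟩ (insert ⟨i₂, v i₂⟩
    (Finset.univ.image fun i => (⟨i, u i⟩ : Σ i, κ i)))
  have hTQ : Ideal.span (X '' T) ≤ Q := by
    rw [Ideal.span_le]
    rintro _ ⟨s, hs, rfl⟩
    simp only [T, Finset.coe_insert, Finset.coe_image, Finset.coe_univ, Set.image_univ,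
      Set.mem_insert_iff, Set.mem_range] at hs
    rcases hs with rfl | rfl | ⟨i, rfl⟩
    exacts [hv i₁, hv i₂, hu i]
  have hQ : ((J.spanFinrank + 3 : ℕ) : ℕ∞) ≤ Q.height := by
    calc ((J.spanFinrank + 3 : ℕ) : ℕ∞) ≤ T.card := by
          rw [card_insert_insert_image_sigmaMk u h12 hv1 hv2]
          exact_mod_cast (by omega)
      _ ≤ _ := card_le_height_span_X_image T
      _ ≤ Q.height := Ideal.height_mono hTQ
  rw [← PrimeSpectrum.height_eq_orderHeight,
    ← Ideal.map_comap_of_surjective _ Ideal.Quotient.mk_surjective P.asIdeal]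
  exact Ideal.le_height_map_quotient (Ideal.mk_ker.symm.trans_le (Ideal.comap_mono bot_le))
    le_rfl hQ

theorem stmt_16_general {𝕂 : Type} [Field 𝕂] (n₀ : ℕ)
    (k : Fin (n₀ + 1) → ℕ)
    (a : Fin n₀ → Fin (n₀ + 1) → 𝕂)
    (f : Fin n₀ → MvPolynomial (Σ i : Fin (n₀ + 1), Fin (k i)) 𝕂)
    (J : Ideal (MvPolynomial (Σ i : Fin (n₀ + 1), Fin (k i)) 𝕂))
    (hJ : J = Ideal.span (Set.range f))
    (u v : ∀ i : Fin (n₀ + 1), Fin (k i))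
    (huv : ∃ i₁ i₂ : Fin (n₀ + 1), i₁ ≠ i₂ ∧ u i₁ ≠ v i₁ ∧ u i₂ ≠ v i₂)
    (Iu Iv : Ideal (MvPolynomial (Σ i : Fin (n₀ + 1), Fin (k i)) 𝕂 ⧸ J))
    (hIu : Iu = Ideal.span
      (Set.range fun i : Fin (n₀ + 1) => Ideal.Quotient.mk J (MvPolynomial.X ⟨i, u i⟩)))
    (hIv : Iv = Ideal.span
      (Set.range fun i : Fin (n₀ + 1) => Ideal.Quotient.mk J (MvPolynomial.X ⟨i, v i⟩))) :
    3 ≤ idealHeight (Iu ⊔ Iv) ∧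
    ∀ i : Fin (n₀ + 1),
      Ideal.Quotient.mk J
        (MvPolynomial.C ((-1 : 𝕂) ^ (i : ℕ) *
            (Matrix.of fun m l : Fin n₀ => a m (i.succAbove l)).det) *
          ∏ b ∈ Finset.univ.erase i,
            ∏ j ∈ Finset.univ.erase (u b), MvPolynomial.X (⟨b, j⟩ : Σ i', Fin (k i'))) ∈ Iv := by
  refine ⟨?_, fun i => ?_⟩
  · subst hIu hIv
    refine three_le_idealHeight_sup J ?_ u v huv
    rw [hJ, Fintype.card_fin]
    exact (Submodule.spanFinrank_span_range_le_card f).trans_lt (by simp)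
  obtain ⟨i₁, i₂, h12, hv1, hv2⟩ := huv
  obtain ⟨i₀, hi₀, hw⟩ : ∃ i₀, i₀ ≠ i ∧ u i₀ ≠ v i₀ := by
    rcases eq_or_ne i₁ i with rfl | h
    exacts [⟨i₂, h12.symm, hv2⟩, ⟨i₁, h, hv1⟩]
  rw [hIv]
  exact Ideal.mem_of_dvd _
    (map_dvd _ (dvd_mul_of_dvd_right (X_dvd_prod_prod_erase u hi₀ hw.symm) _))
    (Ideal.subset_span (Set.mem_range_self i₀))

/-- Lemma 3.2: in `R = S/(f₁, …, f_{n−1})`, if `u, v ∈ M₁ × ⋯ × Mₙ` differ in at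
least two coordinates, then `codim_R (I_u + I_v) ≥ 3` and `φ_u(I_u) ⊆ I_v`,
where `φ_u(uᵢ) = Δᵢ · ∏_{a ≠ i} (X_a / u_a)`. -/
theorem stmt_16 {𝕂 : Type} [Field 𝕂] (n₀ : ℕ) (hn : 1 ≤ n₀)
    (k : Fin (n₀ + 1) → ℕ) (hk : ∀ i, 1 ≤ k i)
    (a : Fin n₀ → Fin (n₀ + 1) → 𝕂)
    (hminors : ∀ j : Fin (n₀ + 1),
      (Matrix.of fun m i : Fin n₀ => a m (j.succAbove i)).det ≠ 0)
    (f : Fin n₀ → MvPolynomial (Σ i : Fin (n₀ + 1), Fin (k i)) 𝕂)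
    (hf : ∀ m, f m = ∑ l : Fin (n₀ + 1),
      MvPolynomial.C (a m l) * ∏ j : Fin (k l), MvPolynomial.X ⟨l, j⟩)
    (J : Ideal (MvPolynomial (Σ i : Fin (n₀ + 1), Fin (k i)) 𝕂))
    (hJ : J = Ideal.span (Set.range f))
    (u v : ∀ i : Fin (n₀ + 1), Fin (k i))
    (huv : ∃ i₁ i₂ : Fin (n₀ + 1), i₁ ≠ i₂ ∧ u i₁ ≠ v i₁ ∧ u i₂ ≠ v i₂)
    (Iu Iv : Ideal (MvPolynomial (Σ i : Fin (n₀ + 1), Fin (k i)) 𝕂 ⧸ J))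
    (hIu : Iu = Ideal.span
      (Set.range fun i : Fin (n₀ + 1) => Ideal.Quotient.mk J (MvPolynomial.X ⟨i, u i⟩)))
    (hIv : Iv = Ideal.span
      (Set.range fun i : Fin (n₀ + 1) => Ideal.Quotient.mk J (MvPolynomial.X ⟨i, v i⟩))) :
    3 ≤ idealHeight (Iu ⊔ Iv) ∧
    ∀ i : Fin (n₀ + 1),
      Ideal.Quotient.mk J
        (MvPolynomial.C ((-1 : 𝕂) ^ (i : ℕ) *
            (Matrix.of fun m l : Fin n₀ => a m (i.succAbove l)).det) *
          ∏ b ∈ Finset.univ.erase i,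
            ∏ j ∈ Finset.univ.erase (u b), MvPolynomial.X (⟨b, j⟩ : Σ i', Fin (k i'))) ∈ Iv :=
  stmt_16_general n₀ k a f J hJ u v huv Iu Iv hIu hIv
end
end

section
/- Every locus of the form V(x_{t₁p₁}, x_{t₁p₂}, x_{t₂p₃}, x_{t₂p₄}, x_{t₃p₅}) with {t₁,t₂,t₃} = {1,2,3}, p₁ ≠ p₂, p₃ ≠ p₄ contains some V(I_u) with u ∈ 𝓛; equivalently, for any such data there exists u ∈ 𝓛 with I_u ⊆ (x_{t₁p₁}, x_{t₁p₂}, x_{t₂p₃}, x_{t₂p₄}, x_{t₃p₅}). -/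
/-!
Each generator of `I_u` is one of the five given variables, so it suffices to choose one
column per row: `a ∈ {p₀, p₁}` in row `σ 0`, `b ∈ {p₂, p₃}` in row `σ 1` and `p₄` in row `σ 2`,
either all equal or pairwise distinct. If `p₄` is available in both of the first two rows, take it
everywhere. Otherwise one of these rows avoids `p₄`; pick in the other row an entry different from
`p₄`, and then in the row avoiding `p₄` an entry different from that one.
-/

theorem exists_ne_of_ne {α : Type*} {x y : α} (hxy : x ≠ y) (z : α) :
    ∃ w, (w = x ∨ w = y) ∧ w ≠ z := by
  by_cases hx : x = z
  · exact ⟨y, Or.inr rfl, hx ▸ hxy.symm⟩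
  · exact ⟨x, Or.inl rfl, hx⟩

theorem exists_choice_eq_or_pairwise_ne {α : Type*} {p₀ p₁ p₂ p₃ : α} (h₀₁ : p₀ ≠ p₁)
    (h₂₃ : p₂ ≠ p₃) (p₄ : α) :
    ∃ a b, (a = p₀ ∨ a = p₁) ∧ (b = p₂ ∨ b = p₃) ∧
      ((a = p₄ ∧ b = p₄) ∨ (a ≠ b ∧ a ≠ p₄ ∧ b ≠ p₄)) := by
  by_cases hboth : (p₄ = p₀ ∨ p₄ = p₁) ∧ (p₄ = p₂ ∨ p₄ = p₃)
  · exact ⟨p₄, p₄, hboth.1, hboth.2, Or.inl ⟨rfl, rfl⟩⟩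
  rw [not_and_or] at hboth
  rcases hboth with h₀₁₄ | h₂₃₄
  · obtain ⟨b, hb, hb₄⟩ := exists_ne_of_ne h₂₃ p₄
    obtain ⟨a, ha, hab⟩ := exists_ne_of_ne h₀₁ b
    exact ⟨a, b, ha, hb, Or.inr ⟨hab, fun ha₄ => h₀₁₄ (ha₄ ▸ ha), hb₄⟩⟩
  · obtain ⟨a, ha, ha₄⟩ := exists_ne_of_ne h₀₁ p₄
    obtain ⟨b, hb, hba⟩ := exists_ne_of_ne h₂₃ a
    exact ⟨a, b, ha, hb, Or.inr ⟨hba.symm, ha₄, fun hb₄ => h₂₃₄ (hb₄ ▸ hb)⟩⟩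

theorem vec3_injective {α : Type*} {a b c : α} (hab : a ≠ b) (hac : a ≠ c) (hbc : b ≠ c) :
    Function.Injective ![a, b, c] := by
  intro i j
  fin_cases i <;> fin_cases j <;> simp [hab, hac, hbc, hab.symm, hac.symm, hbc.symm]

theorem stmt_18_general
    (J : Ideal (MvPolynomial (Fin 3 × Fin 3) ℂ))
    (σ : Equiv.Perm (Fin 3)) (p : Fin 5 → Fin 3)
    (hp01 : p 0 ≠ p 1) (hp23 : p 2 ≠ p 3) :
    ∃ u : Fin 3 → Fin 3, ((∀ i j, u i = u j) ∨ Function.Bijective u) ∧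
      Ideal.span (Set.range fun i : Fin 3 =>
          Ideal.Quotient.mk J (MvPolynomial.X (i, u i))) ≤
        Ideal.span
          {Ideal.Quotient.mk J (MvPolynomial.X (σ 0, p 0)),
           Ideal.Quotient.mk J (MvPolynomial.X (σ 0, p 1)),
           Ideal.Quotient.mk J (MvPolynomial.X (σ 1, p 2)),
           Ideal.Quotient.mk J (MvPolynomial.X (σ 1, p 3)),
           Ideal.Quotient.mk J (MvPolynomial.X (σ 2, p 4))} := by
  obtain ⟨a, b, ha, hb, hab⟩ := exists_choice_eq_or_pairwise_ne hp01 hp23 (p 4)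
  refine ⟨![a, b, p 4] ∘ σ.symm, ?_, ?_⟩
  · rcases hab with ⟨rfl, rfl⟩ | ⟨hab, ha₄, hb₄⟩
    · left
      intro i j
      simp only [Function.comp_apply]
      generalize σ.symm i = k, σ.symm j = l
      fin_cases k <;> fin_cases l <;> rfl
    · right
      exact (Finite.injective_iff_bijective.mp (vec3_injective hab ha₄ hb₄)).comp
        σ.symm.bijective
  · rw [Ideal.span_le]
    rintro _ ⟨i, rfl⟩
    obtain ⟨k, rfl⟩ := σ.surjective i
    simp only [Function.comp_apply, Equiv.symm_apply_apply]
    apply Ideal.subset_span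
    fin_cases k
    · rcases ha with rfl | rfl <;> simp
    · rcases hb with rfl | rfl <;> simp
    · simp

/-- Proposition 4.3: every locus `V(x_{t₁p₁}, x_{t₁p₂}, x_{t₂p₃}, x_{t₂p₄}, x_{t₃p₅})`
with `{t₁,t₂,t₃} = {1,2,3}`, `p₁ ≠ p₂` and `p₃ ≠ p₄` contains some `V(I_u)` with
`u ∈ 𝓛`; equivalently, there exists `u ∈ 𝓛` (a constant triple or a permutation
triple) with `I_u ⊆ (x_{t₁p₁}, x_{t₁p₂}, x_{t₂p₃}, x_{t₂p₄}, x_{t₃p₅})`. -/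
theorem stmt_18
    (b : Fin 2 → Fin 3 → ℂ)
    (hminors : ∀ j : Fin 3,
      (Matrix.of fun m i : Fin 2 => b m (j.succAbove i)).det ≠ 0)
    (f : Fin 2 → MvPolynomial (Fin 3 × Fin 3) ℂ)
    (hf : ∀ m, f m = ∑ l : Fin 3,
      MvPolynomial.C (b m l) * ∏ j : Fin 3, MvPolynomial.X (l, j))
    (J : Ideal (MvPolynomial (Fin 3 × Fin 3) ℂ))
    (hJ : J = Ideal.span (Set.range f))
    (σ : Equiv.Perm (Fin 3)) (p : Fin 5 → Fin 3)
    (hp01 : p 0 ≠ p 1) (hp23 : p 2 ≠ p 3) :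
    ∃ u : Fin 3 → Fin 3, ((∀ i j, u i = u j) ∨ Function.Bijective u) ∧
      Ideal.span (Set.range fun i : Fin 3 =>
          Ideal.Quotient.mk J (MvPolynomial.X (i, u i))) ≤
        Ideal.span
          {Ideal.Quotient.mk J (MvPolynomial.X (σ 0, p 0)),
           Ideal.Quotient.mk J (MvPolynomial.X (σ 0, p 1)),
           Ideal.Quotient.mk J (MvPolynomial.X (σ 1, p 2)),
           Ideal.Quotient.mk J (MvPolynomial.X (σ 1, p 3)),
           Ideal.Quotient.mk J (MvPolynomial.X (σ 2, p 4))} :=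
  stmt_18_general J σ p hp01 hp23
end
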